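/- Let A be densely defined on H and 𝔄 the block operator on H ⊕ H with domain D(CAC) ⊕ D(A) given by 𝔄(x,y) = (Ay, CACx). Then A is C-symmetric if and only if 𝔄 is symmetric, and A is C-self-adjoint if and only if 𝔄 is self-adjoint. Moreover 𝔄* has domain D(A*) ⊕ D(CA*C) and 𝔄*(x,y) = (CA*Cy, A*x). -/

import Mathlib

open scoped InnerProductSpace
open LinearPMap

variable {H : Type*} [NormedAddCommGroup H] [InnerProductSpace ℂ H]

/-- A conjugation on a complex inner product space: a conjugate-linear involution
satisfying `⟪Cx, Cy⟫ = ⟪y, x⟫`. -/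
structure Conjugation (H : Type*) [NormedAddCommGroup H] [InnerProductSpace ℂ H] where
  toFun : H → H
  map_add' : ∀ x y, toFun (x + y) = toFun x + toFun y
  map_smulc : ∀ (c : ℂ) (x : H), toFun (c • x) = (starRingEnd ℂ c) • toFun x
  invol : ∀ x, toFun (toFun x) = x
  inner_conj : ∀ x y, ⟪toFun x, toFun y⟫_ℂ = ⟪y, x⟫_ℂ

namespace Conjugation

instance : CoeFun (Conjugation H) fun _ => H → H := ⟨toFun⟩

lemma map_zero (C : Conjugation H) : C 0 = 0 := by
  have := C.map_smulc 0 0; simpa using this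

lemma mem_of_mem_image (C : Conjugation H) {S : Set H} {x : H} (hx : x ∈ C.toFun '' S) :
    C x ∈ S := by
  obtain ⟨t, ht, rfl⟩ := hx
  rwa [C.invol]

/-- The image `C(D)` of a subspace under a conjugation, as a subspace. -/
def conjDomain (C : Conjugation H) (D : Submodule ℂ H) : Submodule ℂ H where
  carrier := C.toFun '' (D : Set H)
  add_mem' := by
    rintro a b ⟨x, hx, rfl⟩ ⟨y, hy, rfl⟩
    exact ⟨x + y, D.add_mem hx hy, (C.map_add' x y).symm ▸ rfl⟩
  zero_mem' := ⟨0, D.zero_mem, C.map_zero⟩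
  smul_mem' := by
    rintro c a ⟨x, hx, rfl⟩
    refine ⟨(starRingEnd ℂ c) • x, D.smul_mem _ hx, ?_⟩
    rw [C.map_smulc]; simp

lemma conj_mem (C : Conjugation H) {D : Submodule ℂ H} {x : H} (hx : x ∈ C.conjDomain D) :
    C x ∈ D := C.mem_of_mem_image hx

/-- The operator `C T C` with domain `C(D(T))`. -/
noncomputable def conjOp (C : Conjugation H) (T : H →ₗ.[ℂ] H) : H →ₗ.[ℂ] H where
  domain := C.conjDomain T.domain
  toFun :=
  { toFun := fun x => C (T ⟨C ↑x, C.conj_mem x.2⟩)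
    map_add' := by
      intro x y
      have h : (⟨C ↑(x + y), C.conj_mem (x + y).2⟩ : T.domain)
          = ⟨C ↑x, C.conj_mem x.2⟩ + ⟨C ↑y, C.conj_mem y.2⟩ := by
        apply Subtype.ext; simp [C.map_add']
      try dsimp only
      rw [h, T.map_add, C.map_add']
    map_smul' := by
      intro c x
      have h : (⟨C ↑(c • x), C.conj_mem (c • x).2⟩ : T.domain)
          = (starRingEnd ℂ c) • (⟨C ↑x, C.conj_mem x.2⟩ : T.domain) := by
        apply Subtype.ext; simp [C.map_smulc]
      try dsimp only
      rw [h, T.map_smul, C.map_smulc]; simp }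

/-- `A` is `C`-symmetric: `CAC ⊆ A*`. -/
noncomputable def IsCSymmetric [CompleteSpace H] (C : Conjugation H) (A : H →ₗ.[ℂ] H) : Prop :=
  C.conjOp A ≤ A†

/-- `A` is `C`-self-adjoint: `CAC = A*`. -/
noncomputable def IsCSelfAdjoint [CompleteSpace H] (C : Conjugation H) (A : H →ₗ.[ℂ] H) : Prop :=
  C.conjOp A = A†

end Conjugation
variable [CompleteSpace H]

open scoped InnerProductSpace in
/-- The kernel `N(I + A*CA*C)`. -/
noncomputable def kerIplusAstarCAstarC (C : Conjugation H) (A : H →ₗ.[ℂ] H) : Set H :=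
  {g | ∃ hg : g ∈ (C.conjOp (A†)).domain, ∃ h2 : (C.conjOp (A†)) ⟨g, hg⟩ ∈ (A†).domain,
      g + A† ⟨(C.conjOp (A†)) ⟨g, hg⟩, h2⟩ = 0}

/-- The kernel `N(I + CA*CA*)`. -/
noncomputable def kerIplusCAstarCAstar (C : Conjugation H) (A : H →ₗ.[ℂ] H) : Set H :=
  {g | ∃ hg : g ∈ (A†).domain, ∃ h2 : A† ⟨g, hg⟩ ∈ (C.conjOp (A†)).domain,
      g + (C.conjOp (A†)) ⟨A† ⟨g, hg⟩, h2⟩ = 0}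

/-- The kernel `N(I + A*B*)` where `B = CAC`. -/
noncomputable def kerIplusAstarBstar (C : Conjugation H) (A : H →ₗ.[ℂ] H) : Set H :=
  {g | ∃ hg : g ∈ ((C.conjOp A)†).domain, ∃ h2 : (C.conjOp A)† ⟨g, hg⟩ ∈ (A†).domain,
      g + A† ⟨(C.conjOp A)† ⟨g, hg⟩, h2⟩ = 0}

open scoped InnerProductSpace in
/-- The orthogonal complement of `S` within `W`, with respect to the graph inner
product `⟪f, g⟫ + ⟪Tf, Tg⟫` of `T`. -/
def graphOrthComplIn (T : H →ₗ.[ℂ] H) (W S : Set H) : Set H :=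
  {g | g ∈ W ∧ ∃ hg : g ∈ T.domain, ∀ f ∈ S, ∀ hf : f ∈ T.domain,
      ⟪f, g⟫_ℂ + ⟪T ⟨f, hf⟩, T ⟨g, hg⟩⟫_ℂ = 0}

/-- The deficiency space `N(T* - μ)`. -/
noncomputable def defectSpace (T : H →ₗ.[ℂ] H) (μ : ℂ) : Submodule ℂ H where
  carrier := {z | ∃ hz : z ∈ (T†).domain, T† ⟨z, hz⟩ = μ • z}
  add_mem' := by
    rintro a b ⟨ha, hva⟩ ⟨hb, hvb⟩
    refine ⟨(T†).domain.add_mem ha hb, ?_⟩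
    have h : (⟨a + b, (T†).domain.add_mem ha hb⟩ : (T†).domain) = ⟨a, ha⟩ + ⟨b, hb⟩ := rfl
    rw [h, LinearPMap.map_add, hva, hvb, smul_add]
  zero_mem' := by
    refine ⟨(T†).domain.zero_mem, ?_⟩
    have h : (⟨(0 : H), (T†).domain.zero_mem⟩ : (T†).domain) = 0 := rfl
    rw [h, LinearPMap.map_zero, smul_zero]
  smul_mem' := by
    rintro c a ⟨ha, hva⟩
    refine ⟨(T†).domain.smul_mem c ha, ?_⟩
    have h : (⟨c • a, (T†).domain.smul_mem c ha⟩ : (T†).domain) = c • ⟨a, ha⟩ := rfl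
    rw [h, LinearPMap.map_smul, hva, smul_comm]


/-!
With `B = CAC`, the block operator is the off-diagonal operator matrix `[[0, A], [B, 0]]`. For any
densely defined `A` and `B`, testing against vectors `(x, 0)` and `(0, y)` shows that the adjoint of
such a matrix is `[[0, B*], [A*, 0]]` on `D(A*) ⊕ D(B*)`. Comparing off-diagonal matrices entrywise,
it is symmetric iff `B ⊆ A*` and `A ⊆ B*`, two conditions that are equivalent, and self-adjoint iff
`B* = A` and `A* = B`. Since `C` is an antiunitary involution, `(CAC)* = CA*C` and `C(CAC)C = A`,
so for `B = CAC` the condition `B = A*` already forces `B* = A`.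
-/

namespace LinearPMap

variable {𝕜 E F : Type*} [RCLike 𝕜] [NormedAddCommGroup E] [InnerProductSpace 𝕜 E]
  [NormedAddCommGroup F] [InnerProductSpace 𝕜 F]

section Adjoint

variable [CompleteSpace E]

lemma mem_graph_adjoint_iff {T : E →ₗ.[𝕜] F} (hT : Dense (T.domain : Set E)) {w : F} {v : E} :
    (w, v) ∈ T†.graph ↔ ∀ x : T.domain, ⟪v, (x : E)⟫_𝕜 = ⟪w, T x⟫_𝕜 := by
  rw [mem_graph_iff]
  constructor
  · rintro ⟨w', rfl, rfl⟩
    exact adjoint_isFormalAdjoint hT w'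
  · intro h
    exact ⟨⟨w, mem_adjoint_domain_of_exists w ⟨v, h⟩⟩, rfl, adjoint_apply_eq hT _ h⟩

lemma isFormalAdjoint_of_le_adjoint {T : E →ₗ.[𝕜] F} {S : F →ₗ.[𝕜] E}
    (hT : Dense (T.domain : Set E)) (h : S ≤ T†) : S.IsFormalAdjoint T := fun x y ↦ by
  obtain ⟨x', hx', hxx'⟩ := exists_of_le h x
  rw [hxx', hx']
  exact adjoint_isFormalAdjoint hT x' y

lemma isFormalAdjoint_self_iff_le_adjoint {T : E →ₗ.[𝕜] E} (hT : Dense (T.domain : Set E)) :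
    T.IsFormalAdjoint T ↔ T ≤ T† :=
  ⟨fun h ↦ h.le_adjoint hT, isFormalAdjoint_of_le_adjoint hT⟩

lemma le_adjoint_comm [CompleteSpace F] {A : F →ₗ.[𝕜] E} {B : E →ₗ.[𝕜] F}
    (hA : Dense (A.domain : Set F)) (hB : Dense (B.domain : Set E)) : B ≤ A† ↔ A ≤ B† :=
  ⟨fun h ↦ (isFormalAdjoint_of_le_adjoint hA h).le_adjoint hB,
    fun h ↦ (isFormalAdjoint_of_le_adjoint hB h).le_adjoint hA⟩

end Adjoint

open WithLp in
/-- `T` is the operator matrix `[[0, A], [B, 0]]` on `E ⊕ F` with domain `D(B) ⊕ D(A)`. -/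
structure IsAntidiagonal (T : WithLp 2 (E × F) →ₗ.[𝕜] WithLp 2 (E × F)) (A : F →ₗ.[𝕜] E)
    (B : E →ₗ.[𝕜] F) : Prop where
  mem_domain_iff : ∀ z, z ∈ T.domain ↔ z.fst ∈ B.domain ∧ z.snd ∈ A.domain
  apply_eq : ∀ (z : T.domain) (hx : (z : WithLp 2 (E × F)).fst ∈ B.domain)
    (hy : (z : WithLp 2 (E × F)).snd ∈ A.domain), T z = toLp 2 (A ⟨_, hy⟩, B ⟨_, hx⟩)

namespace IsAntidiagonal

open WithLp

variable {T T' : WithLp 2 (E × F) →ₗ.[𝕜] WithLp 2 (E × F)} {A A' : F →ₗ.[𝕜] E}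
  {B B' : E →ₗ.[𝕜] F}

lemma toLp_zero_left_mem (hT : IsAntidiagonal T A B) {y : F} (hy : y ∈ A.domain) :
    toLp 2 (0, y) ∈ T.domain :=
  (hT.mem_domain_iff _).2 ⟨B.domain.zero_mem, hy⟩

lemma toLp_zero_right_mem (hT : IsAntidiagonal T A B) {x : E} (hx : x ∈ B.domain) :
    toLp 2 (x, 0) ∈ T.domain :=
  (hT.mem_domain_iff _).2 ⟨hx, A.domain.zero_mem⟩

lemma apply_toLp_zero_left (hT : IsAntidiagonal T A B) {y : F} (hy : y ∈ A.domain) :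
    T ⟨_, hT.toLp_zero_left_mem hy⟩ = toLp 2 (A ⟨y, hy⟩, 0) := by
  rw [hT.apply_eq ⟨_, hT.toLp_zero_left_mem hy⟩ B.domain.zero_mem hy]
  exact congrArg _ (Prod.ext rfl B.map_zero)

lemma apply_toLp_zero_right (hT : IsAntidiagonal T A B) {x : E} (hx : x ∈ B.domain) :
    T ⟨_, hT.toLp_zero_right_mem hx⟩ = toLp 2 (0, B ⟨x, hx⟩) := by
  rw [hT.apply_eq ⟨_, hT.toLp_zero_right_mem hx⟩ hx A.domain.zero_mem]
  exact congrArg _ (Prod.ext A.map_zero rfl)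

lemma dense_domain (hT : IsAntidiagonal T A B) (hA : Dense (A.domain : Set F))
    (hB : Dense (B.domain : Set E)) : Dense (T.domain : Set (WithLp 2 (E × F))) := by
  refine ((toLp_surjective 2).denseRange.dense_image (prod_continuous_toLp 2 E F)
    (hB.prod hA)).mono ?_
  rintro _ ⟨z, hz, rfl⟩
  exact (hT.mem_domain_iff _).2 hz

lemma le_iff (hT : IsAntidiagonal T A B) (hT' : IsAntidiagonal T' A' B') :
    T ≤ T' ↔ A ≤ A' ∧ B ≤ B' := by
  constructor
  · intro h
    refine ⟨⟨fun y hy ↦ ?_, fun y y' hyy' ↦ ?_⟩, ⟨fun x hx ↦ ?_, fun x x' hxx' ↦ ?_⟩⟩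
    · exact ((hT'.mem_domain_iff _).1 (h.1 (hT.toLp_zero_left_mem hy))).2
    · have := congrArg WithLp.fst (h.2 (x := ⟨_, hT.toLp_zero_left_mem y.2⟩)
        (y := ⟨_, hT'.toLp_zero_left_mem y'.2⟩) (by simp [hyy']))
      simpa [hT.apply_toLp_zero_left, hT'.apply_toLp_zero_left] using this
    · exact ((hT'.mem_domain_iff _).1 (h.1 (hT.toLp_zero_right_mem hx))).1
    · have := congrArg WithLp.snd (h.2 (x := ⟨_, hT.toLp_zero_right_mem x.2⟩)
        (y := ⟨_, hT'.toLp_zero_right_mem x'.2⟩) (by simp [hxx']))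
      simpa [hT.apply_toLp_zero_right, hT'.apply_toLp_zero_right] using this
  · rintro ⟨hA, hB⟩
    refine ⟨fun z hz ↦ ?_, fun z z' hzz' ↦ ?_⟩
    · obtain ⟨hx, hy⟩ := (hT.mem_domain_iff z).1 hz
      exact (hT'.mem_domain_iff z).2 ⟨hB.1 hx, hA.1 hy⟩
    · obtain ⟨hx, hy⟩ := (hT.mem_domain_iff z).1 z.2
      obtain ⟨hx', hy'⟩ := (hT'.mem_domain_iff z').1 z'.2
      rw [hT.apply_eq z hx hy, hT'.apply_eq z' hx' hy', hA.2 (y := ⟨_, hy'⟩) (by simp [hzz']),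
        hB.2 (y := ⟨_, hx'⟩) (by simp [hzz'])]

lemma eq_iff (hT : IsAntidiagonal T A B) (hT' : IsAntidiagonal T' A' B') :
    T = T' ↔ A = A' ∧ B = B' := by
  simp only [le_antisymm_iff, hT.le_iff hT', hT'.le_iff hT]
  tauto

variable [CompleteSpace E] [CompleteSpace F]

lemma mem_graph_adjoint_iff (hT : IsAntidiagonal T A B) (hA : Dense (A.domain : Set F))
    (hB : Dense (B.domain : Set E)) {w v : WithLp 2 (E × F)} :
    (w, v) ∈ T†.graph ↔ (w.fst, v.snd) ∈ A†.graph ∧ (w.snd, v.fst) ∈ B†.graph := by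
  rw [LinearPMap.mem_graph_adjoint_iff (hT.dense_domain hA hB),
    LinearPMap.mem_graph_adjoint_iff hA, LinearPMap.mem_graph_adjoint_iff hB]
  constructor
  · intro h
    refine ⟨fun y ↦ ?_, fun x ↦ ?_⟩
    · simpa [prod_inner_apply, hT.apply_toLp_zero_left] using h ⟨_, hT.toLp_zero_left_mem y.2⟩
    · simpa [prod_inner_apply, hT.apply_toLp_zero_right] using h ⟨_, hT.toLp_zero_right_mem x.2⟩
  · rintro ⟨hAw, hBw⟩ z
    obtain ⟨hx, hy⟩ := (hT.mem_domain_iff z).1 z.2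
    rw [hT.apply_eq z hx hy, prod_inner_apply, prod_inner_apply]
    exact (congrArg₂ (· + ·) (hBw ⟨_, hx⟩) (hAw ⟨_, hy⟩)).trans (add_comm _ _)

lemma adjoint (hT : IsAntidiagonal T A B) (hA : Dense (A.domain : Set F))
    (hB : Dense (B.domain : Set E)) : IsAntidiagonal T† B† A† where
  mem_domain_iff w := by
    simp only [LinearPMap.mem_domain_iff, hT.mem_graph_adjoint_iff hA hB]
    constructor
    · rintro ⟨v, hAw, hBw⟩
      exact ⟨⟨_, hAw⟩, ⟨_, hBw⟩⟩
    · rintro ⟨⟨a, hAw⟩, ⟨b, hBw⟩⟩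
      exact ⟨toLp 2 (b, a), hAw, hBw⟩
  apply_eq w hx hy := by
    obtain ⟨hAw, hBw⟩ := (hT.mem_graph_adjoint_iff hA hB).1 (T†.mem_graph w)
    exact ofLp_injective 2 (Prod.ext (B†.mem_graph_snd_inj hBw (B†.mem_graph ⟨_, hy⟩) rfl)
      (A†.mem_graph_snd_inj hAw (A†.mem_graph ⟨_, hx⟩) rfl))

lemma isFormalAdjoint_self_iff (hT : IsAntidiagonal T A B) (hA : Dense (A.domain : Set F))
    (hB : Dense (B.domain : Set E)) : T.IsFormalAdjoint T ↔ B ≤ A† := by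
  rw [isFormalAdjoint_self_iff_le_adjoint (hT.dense_domain hA hB),
    hT.le_iff (hT.adjoint hA hB), ← le_adjoint_comm hA hB, and_self]

lemma adjoint_eq_self_iff (hT : IsAntidiagonal T A B) (hA : Dense (A.domain : Set F))
    (hB : Dense (B.domain : Set E)) : T† = T ↔ B† = A ∧ A† = B :=
  (hT.adjoint hA hB).eq_iff hT

end IsAntidiagonal

end LinearPMap

namespace Conjugation

variable {V : Type*} [NormedAddCommGroup V] [InnerProductSpace ℂ V] (C : Conjugation V)

lemma mem_conjDomain_iff {D : Submodule ℂ V} {x : V} : x ∈ C.conjDomain D ↔ C x ∈ D :=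
  ⟨C.conj_mem, fun h ↦ ⟨C x, h, C.invol x⟩⟩

lemma inner_map_map (x y : V) : ⟪C x, C y⟫_ℂ = starRingEnd ℂ ⟪x, y⟫_ℂ := by
  rw [C.inner_conj, inner_conj_symm]

def conjDomainEquiv (D : Submodule ℂ V) : C.conjDomain D ≃ D where
  toFun x := ⟨C x, C.conj_mem x.2⟩
  invFun y := ⟨C y, (C.mem_conjDomain_iff).2 ((C.invol y).symm ▸ y.2)⟩
  left_inv x := Subtype.ext (C.invol x)
  right_inv y := Subtype.ext (C.invol y)

def toAddMonoidHom : V →+ V := AddMonoidHom.mk' C C.map_add'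

lemma norm_map (x : V) : ‖C x‖ = ‖x‖ := by
  rw [@norm_eq_sqrt_re_inner ℂ, @norm_eq_sqrt_re_inner ℂ, C.inner_conj]

lemma continuous : Continuous C :=
  (AddMonoidHomClass.isometry_of_norm C.toAddMonoidHom C.norm_map).continuous

lemma dense_conjDomain {D : Submodule ℂ V} (hD : Dense (D : Set V)) :
    Dense (C.conjDomain D : Set V) :=
  (Function.RightInverse.surjective C.invol).denseRange.dense_image C.continuous hD

lemma mem_graph_conjOp_iff {T : V →ₗ.[ℂ] V} {x y : V} :
    (x, y) ∈ (C.conjOp T).graph ↔ (C x, C y) ∈ T.graph := by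
  simp only [LinearPMap.mem_graph_iff]
  constructor
  · rintro ⟨x', rfl, rfl⟩
    exact ⟨⟨C x', C.conj_mem x'.2⟩, rfl, (C.invol _).symm⟩
  · rintro ⟨y', hy', hTy'⟩
    refine ⟨⟨x, (C.mem_conjDomain_iff).2 (hy' ▸ y'.2)⟩, rfl, ?_⟩
    change C (T ⟨C x, _⟩) = y
    rw [show (⟨C x, _⟩ : T.domain) = y' from Subtype.ext hy'.symm, hTy', C.invol]

lemma conjOp_conjOp (T : V →ₗ.[ℂ] V) : C.conjOp (C.conjOp T) = T := by
  refine LinearPMap.eq_of_eq_graph (Submodule.ext fun ⟨x, y⟩ ↦ ?_)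
  rw [C.mem_graph_conjOp_iff, C.mem_graph_conjOp_iff, C.invol, C.invol]

lemma adjoint_conjOp [CompleteSpace V] {T : V →ₗ.[ℂ] V} (hT : Dense (T.domain : Set V)) :
    (C.conjOp T)† = C.conjOp T† := by
  refine LinearPMap.eq_of_eq_graph (Submodule.ext fun ⟨w, v⟩ ↦ ?_)
  rw [LinearPMap.mem_graph_adjoint_iff (C.dense_conjDomain hT), C.mem_graph_conjOp_iff,
    LinearPMap.mem_graph_adjoint_iff hT]
  refine (C.conjDomainEquiv T.domain).forall_congr fun x ↦ ?_
  change _ ↔ ⟪C v, C x⟫_ℂ = ⟪C w, T _⟫_ℂ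
  rw [C.inner_map_map, ← C.invol (T _), C.inner_map_map]
  exact (starRingEnd ℂ).injective.eq_iff.symm

end Conjugation

theorem stmt_14_general (C : Conjugation H) (A : H →ₗ.[ℂ] H) (hA : Dense (A.domain : Set H))
    (fA : WithLp 2 (H × H) →ₗ.[ℂ] WithLp 2 (H × H))
    (hdom : ∀ z, z ∈ fA.domain ↔ ((WithLp.equiv 2 (H × H)) z).1 ∈ (C.conjOp A).domain
        ∧ ((WithLp.equiv 2 (H × H)) z).2 ∈ A.domain)
    (hval : ∀ (z : fA.domain) (h2 : ((WithLp.equiv 2 (H × H)) (z : WithLp 2 (H × H))).2 ∈ A.domain)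
        (h1 : C ((WithLp.equiv 2 (H × H)) (z : WithLp 2 (H × H))).1 ∈ A.domain),
        (WithLp.equiv 2 (H × H)) (fA z)
          = (A ⟨((WithLp.equiv 2 (H × H)) (z : WithLp 2 (H × H))).2, h2⟩,
             C (A ⟨C ((WithLp.equiv 2 (H × H)) (z : WithLp 2 (H × H))).1, h1⟩))) :
    (C.IsCSymmetric A ↔
      ∀ z w : fA.domain, ⟪fA z, (w : WithLp 2 (H × H))⟫_ℂ = ⟪(z : WithLp 2 (H × H)), fA w⟫_ℂ)
    ∧ (C.IsCSelfAdjoint A ↔ fA† = fA)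
    ∧ (∀ w, w ∈ (fA†).domain ↔ ((WithLp.equiv 2 (H × H)) w).1 ∈ (A†).domain
        ∧ ((WithLp.equiv 2 (H × H)) w).2 ∈ (C.conjOp (A†)).domain)
    ∧ (∀ (w : (fA†).domain) (h1 : C ((WithLp.equiv 2 (H × H)) (w : WithLp 2 (H × H))).2 ∈ (A†).domain)
        (h2 : ((WithLp.equiv 2 (H × H)) (w : WithLp 2 (H × H))).1 ∈ (A†).domain),
        (WithLp.equiv 2 (H × H)) (fA† w)
          = (C (A† ⟨C ((WithLp.equiv 2 (H × H)) (w : WithLp 2 (H × H))).2, h1⟩),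
             A† ⟨((WithLp.equiv 2 (H × H)) (w : WithLp 2 (H × H))).1, h2⟩)) := by
  have hB : Dense ((C.conjOp A).domain : Set H) := C.dense_conjDomain hA
  have hT : fA.IsAntidiagonal A (C.conjOp A) :=
    ⟨hdom, fun z hx hy ↦ (WithLp.equiv 2 (H × H)).injective (hval z hy (C.conj_mem hx))⟩
  have hT' : fA†.IsAntidiagonal (C.conjOp A†) A† := C.adjoint_conjOp hA ▸ hT.adjoint hA hB
  refine ⟨(hT.isFormalAdjoint_self_iff hA hB).symm, ?_, hT'.mem_domain_iff, fun w h1 h2 ↦ ?_⟩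
  · rw [hT.adjoint_eq_self_iff hA hB, C.adjoint_conjOp hA, Conjugation.IsCSelfAdjoint]
    refine ⟨fun h ↦ ⟨?_, h.symm⟩, fun h ↦ h.2.symm⟩
    rw [← h, C.conjOp_conjOp]
  · exact congrArg (WithLp.equiv 2 (H × H)) (hT'.apply_eq w h2 ((C.mem_conjDomain_iff).2 h1))

theorem stmt_14 (C : Conjugation H) (A : H →ₗ.[ℂ] H) (hA : Dense (A.domain : Set H))
    (fC : Conjugation (WithLp 2 (H × H)))
    (hfC : ∀ z, WithLp.equiv 2 (H × H) (fC z)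
      = (C ((WithLp.equiv 2 (H × H)) z).2, C ((WithLp.equiv 2 (H × H)) z).1))
    (fA : WithLp 2 (H × H) →ₗ.[ℂ] WithLp 2 (H × H))
    (hdom : ∀ z, z ∈ fA.domain ↔ ((WithLp.equiv 2 (H × H)) z).1 ∈ (C.conjOp A).domain
        ∧ ((WithLp.equiv 2 (H × H)) z).2 ∈ A.domain)
    (hval : ∀ (z : fA.domain) (h2 : ((WithLp.equiv 2 (H × H)) (z : WithLp 2 (H × H))).2 ∈ A.domain)
        (h1 : C ((WithLp.equiv 2 (H × H)) (z : WithLp 2 (H × H))).1 ∈ A.domain),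
        (WithLp.equiv 2 (H × H)) (fA z)
          = (A ⟨((WithLp.equiv 2 (H × H)) (z : WithLp 2 (H × H))).2, h2⟩,
             C (A ⟨C ((WithLp.equiv 2 (H × H)) (z : WithLp 2 (H × H))).1, h1⟩))) :
    (C.IsCSymmetric A ↔
      ∀ z w : fA.domain, ⟪fA z, (w : WithLp 2 (H × H))⟫_ℂ = ⟪(z : WithLp 2 (H × H)), fA w⟫_ℂ)
    ∧ (C.IsCSelfAdjoint A ↔ fA† = fA)
    ∧ (∀ w, w ∈ (fA†).domain ↔ ((WithLp.equiv 2 (H × H)) w).1 ∈ (A†).domain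
        ∧ ((WithLp.equiv 2 (H × H)) w).2 ∈ (C.conjOp (A†)).domain)
    ∧ (∀ (w : (fA†).domain) (h1 : C ((WithLp.equiv 2 (H × H)) (w : WithLp 2 (H × H))).2 ∈ (A†).domain)
        (h2 : ((WithLp.equiv 2 (H × H)) (w : WithLp 2 (H × H))).1 ∈ (A†).domain),
        (WithLp.equiv 2 (H × H)) (fA† w)
          = (C (A† ⟨C ((WithLp.equiv 2 (H × H)) (w : WithLp 2 (H × H))).2, h1⟩),
             A† ⟨((WithLp.equiv 2 (H × H)) (w : WithLp 2 (H × H))).1, h2⟩)) :=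
  stmt_14_general C A hA fA hdom hval
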